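/- arXiv:math/0503079 — 3 statements merged into one kernel-verified Lean document; each statement's English description precedes it below -/
import Mathlib

section
/- Let a ∈ Δ, c ∈ Δ with c ≠ 0, and let z₁, z₂ be the two roots of z² − z(a − \bar{a}c) − c = 0 (the preimages of c under the Blaschke product A_a(z) = z(z−a)/(1−\bar{a}z)). Then the hyperbolic distance ρ(0, z₁) equals the hyperbolic distance ρ(a, z₂). -/
open Complex Metric Filter

/-- Poincaré distance on the unit disk, normalized with density 1/(1-|z|^2). -/
noncomputable def rho (z w : ℂ) : ℝ :=
  (1 / 2) * Real.log ((1 + ‖(z - w) / (1 - (starRingEnd ℂ) w * z)‖) /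
    (1 - ‖(z - w) / (1 - (starRingEnd ℂ) w * z)‖))

/-- The open unit disk Δ. -/
def unitDisk : Set ℂ := Metric.ball (0 : ℂ) 1

/-- The hyperbolic disk of center `a` and ρ-radius `r` inside Δ. -/
def hBall (a : ℂ) (r : ℝ) : Set ℂ := {z ∈ unitDisk | rho a z < r}

/-- `X` is a ρ-Bloch subdomain of Δ: the ρ-radii of hyperbolic disks contained in `X`
are bounded. -/
def IsBloch (X : Set ℂ) : Prop :=
  ∃ R : ℝ, ∀ a ∈ unitDisk, ∀ r : ℝ, hBall a r ⊆ X → r ≤ R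

/-- `f` is holomorphic on Δ with values in `X`. -/
def HolOn (f : ℂ → ℂ) (X : Set ℂ) : Prop :=
  DifferentiableOn ℂ f unitDisk ∧ Set.MapsTo f unitDisk X

/-- The compositions `F_n = f 1 ∘ f 2 ∘ ⋯ ∘ f n` (with `F_0 = id`). -/
def comps (f : ℕ → ℂ → ℂ) : ℕ → ℂ → ℂ
  | 0 => id
  | n + 1 => comps f n ∘ f (n + 1)

/-- `X` is degenerate in Δ: every locally uniform subsequential limit of the
compositions of any sequence in Hol(Δ, X) is constant on Δ. -/
def Degenerate (X : Set ℂ) : Prop :=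
  ∀ f : ℕ → ℂ → ℂ, (∀ n, 1 ≤ n → HolOn (f n) X) →
    ∀ φ : ℕ → ℕ, StrictMono φ → ∀ F : ℂ → ℂ,
      TendstoLocallyUniformlyOn (fun k => comps f (φ k)) F atTop unitDisk →
      ∀ z ∈ unitDisk, ∀ w ∈ unitDisk, F z = F w

/-- The Poincaré distance of the hyperbolic domain `X` (as the distance pushed
forward from the disk by holomorphic maps; for domains covered by Δ this agrees
with the Poincaré metric of `X`). -/
noncomputable def rhoX (X : Set ℂ) (a b : ℂ) : ℝ :=
  sInf {r : ℝ | ∃ f : ℂ → ℂ, ∃ t ∈ unitDisk,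
    HolOn f X ∧ f 0 = a ∧ f t = b ∧ r = rho 0 t}

/- The Möbius map `z ↦ (z - a)/(1 - ā z)` sends the root `z₂` to `-z₁`: Vieta's formulas
`z₁ + z₂ = a - ā c`, `z₁ z₂ = -c` give `z₂ - a = -z₁ (1 - ā z₂)`. Since `ρ` is symmetric and
`ρ(z, w)` depends only on `(z - w)/(1 - w̄ z)` up to sign, `ρ(a, z₂) = ρ(z₂, a) = ρ(0, z₁)`. -/

theorem vieta_of_forall_root_iff {R : Type*} [CommRing R] [NoZeroDivisors R] {s c z₁ z₂ : R}
    (hroots : ∀ z, z ^ 2 - z * s - c = 0 ↔ z = z₁ ∨ z = z₂) :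
    z₁ + z₂ = s ∧ z₁ * z₂ = -c := by
  have h₁ := (hroots z₁).mpr (Or.inl rfl)
  have h₂ := (hroots z₂).mpr (Or.inr rfl)
  rcases (hroots (s - z₁)).mp (by linear_combination h₁) with hdouble | hother
  · obtain rfl : z₂ = z₁ := by
      have : (z₂ - z₁) ^ 2 = 0 := by linear_combination h₂ - h₁ + (z₂ - z₁) * hdouble
      exact sub_eq_zero.mp (pow_eq_zero_iff two_ne_zero |>.mp this)
    exact ⟨by linear_combination -hdouble, by linear_combination -h₁ - z₂ * hdouble⟩
  · exact ⟨by linear_combination -hother, by linear_combination -h₁ - z₁ * hother⟩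

theorem one_sub_conj_mul_self_ne_zero {a : ℂ} (ha : ‖a‖ < 1) : 1 - starRingEnd ℂ a * a ≠ 0 := by
  rw [← Complex.normSq_eq_conj_mul_self, sub_ne_zero, ne_comm]
  exact_mod_cast (Complex.normSq_eq_norm_sq a ▸ (by nlinarith [norm_nonneg a] : ‖a‖ ^ 2 < 1)).ne

theorem rho_comm (z w : ℂ) : rho z w = rho w z := by
  have hnorm : ‖(z - w) / (1 - starRingEnd ℂ w * z)‖ = ‖(w - z) / (1 - starRingEnd ℂ z * w)‖ := by
    rw [norm_div, norm_div, ← norm_neg (z - w), neg_sub,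
      ← Complex.norm_conj (1 - starRingEnd ℂ w * z)]
    simp [mul_comm]
  simp only [rho, hnorm]

theorem rho_eq_rho_zero_of_div_eq_neg {z w u : ℂ} (h : (z - w) / (1 - starRingEnd ℂ w * z) = -u) :
    rho z w = rho 0 u := by
  simp [rho, h]

theorem div_one_sub_conj_mul_eq_neg_of_vieta {a c z₁ z₂ : ℂ} (ha : ‖a‖ < 1)
    (hsum : z₁ + z₂ = a - starRingEnd ℂ a * c) (hprod : z₁ * z₂ = -c) :
    (z₂ - a) / (1 - starRingEnd ℂ a * z₂) = -z₁ := by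
  have key : z₂ - a = -z₁ * (1 - starRingEnd ℂ a * z₂) := by
    linear_combination hsum - starRingEnd ℂ a * hprod
  have hden : 1 - starRingEnd ℂ a * z₂ ≠ 0 := by
    intro h0
    obtain rfl : z₂ = a := sub_eq_zero.mp (by rw [key, h0, mul_zero])
    exact one_sub_conj_mul_self_ne_zero ha h0
  rw [div_eq_iff hden, key]

theorem stmt1_general (a c z₁ z₂ : ℂ) (ha : a ∈ unitDisk)
    (hroots : ∀ z : ℂ,
      z ^ 2 - z * (a - (starRingEnd ℂ) a * c) - c = 0 ↔ z = z₁ ∨ z = z₂) :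
    rho 0 z₁ = rho a z₂ := by
  obtain ⟨hsum, hprod⟩ := vieta_of_forall_root_iff hroots
  have ha' : ‖a‖ < 1 := by simpa [unitDisk] using ha
  rw [rho_comm a,
    rho_eq_rho_zero_of_div_eq_neg (div_one_sub_conj_mul_eq_neg_of_vieta ha' hsum hprod)]

/-- If `z₁, z₂` are the two roots of `z² - z(a - ā c) - c = 0` (the preimages of
`c ≠ 0` under `A_a(z) = z(z-a)/(1-ā z)`), then `ρ(0, z₁) = ρ(a, z₂)`. -/
theorem stmt1 (a c z₁ z₂ : ℂ) (ha : a ∈ unitDisk) (hc : c ∈ unitDisk) (hc0 : c ≠ 0)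
    (hroots : ∀ z : ℂ,
      z ^ 2 - z * (a - (starRingEnd ℂ) a * c) - c = 0 ↔ z = z₁ ∨ z = z₂) :
    rho 0 z₁ = rho a z₂ :=
  stmt1_general a c z₁ z₂ ha hroots
end

section
/- Let X ⊂ Δ be a subdomain, a ∈ X, and let C = R(X,Δ,a) be the radius (in the Poincaré metric ρ of Δ) of the largest hyperbolic disk centered at a contained in X. If z ∈ X satisfies ρ(a,z) < 1 < C, then ρ_X(a,z) ≤ (1+ε(C))·ρ(a,z), where ε(C) → 0 as C → ∞. -/
/-!
Put `u = (z - a) / (1 - ā z)`, so that `ρ(a, z) = artanh |u|`. The map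
`w ↦ (tanh C · w + a) / (1 + ā tanh C · w)` is a disk automorphism precomposed with a
contraction by `tanh C`; it sends Δ into the hyperbolic disk of radius `C` about `a`, hence
into `X`, and it sends `0 ↦ a` and `u / tanh C ↦ z`. Hence `ρ_X(a, z) ≤ artanh (|u| / tanh C)`.
As `|u| < tanh 1 < tanh C`, comparing `artanh` at `|u|` and `|u| / tanh C` through
`log x ≤ x - 1` gives the factor `1 + 2 (1 - tanh C) / (tanh C - tanh 1)`, and `tanh C → 1`.
-/

open Complex Metric Filter

open ComplexConjugate Topology

namespace Real

theorem tanh_strictMono : StrictMono tanh := fun p q hpq => by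
  by_contra! h
  have := artanh_le_artanh (neg_one_lt_tanh q) (tanh_lt_one p) h
  rw [artanh_tanh, artanh_tanh] at this
  linarith

theorem tanh_pos {x : ℝ} (hx : 0 < x) : 0 < tanh x := by
  simpa using tanh_strictMono hx

theorem one_sub_tanh (x : ℝ) : 1 - tanh x = 2 / (exp (2 * x) + 1) := by
  rw [tanh_eq, show 2 * x = x + x by ring, exp_add, exp_neg]
  field_simp
  ring

theorem tendsto_tanh_atTop : Tendsto tanh atTop (𝓝 1) := by
  have h : Tendsto (fun x => 2 / (exp (2 * x) + 1)) atTop (𝓝 0) :=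
    tendsto_const_nhds.div_atTop <| tendsto_atTop_add_const_right _ _ <|
      tendsto_exp_atTop.comp (tendsto_id.const_mul_atTop two_pos)
  simpa only [← one_sub_tanh, sub_sub_cancel, sub_zero] using
    (tendsto_const_nhds (x := (1 : ℝ))).sub h

theorem half_le_artanh {x : ℝ} (hx : 0 ≤ x) (hx1 : x < 1) : x / 2 ≤ artanh x := by
  rw [artanh_eq_half_log ⟨by linarith, hx1.le⟩, log_div (by linarith) (by linarith)]
  have h1 : 0 ≤ log (1 + x) := log_nonneg (by linarith)
  have h2 : log (1 - x) ≤ -x := by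
    linarith [log_le_sub_one_of_pos (by linarith : 0 < 1 - x)]
  linarith

theorem artanh_sub_artanh_le {x y : ℝ} (hx : 0 ≤ x) (hxy : x ≤ y) (hy : y < 1) :
    artanh y - artanh x ≤ (y - x) / (1 - y) := by
  have h1y : 0 < 1 - y := by linarith
  have hplus : log (1 + y) - log (1 + x) ≤ (y - x) / (1 + x) := by
    rw [← log_div (by linarith) (by linarith)]
    calc log ((1 + y) / (1 + x)) ≤ (1 + y) / (1 + x) - 1 :=
          log_le_sub_one_of_pos (by apply div_pos <;> linarith)
      _ = (y - x) / (1 + x) := by field_simp; ring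
  have hminus : log (1 - x) - log (1 - y) ≤ (y - x) / (1 - y) := by
    rw [← log_div (by linarith) (by linarith)]
    calc log ((1 - x) / (1 - y)) ≤ (1 - x) / (1 - y) - 1 :=
          log_le_sub_one_of_pos (by apply div_pos <;> linarith)
      _ = (y - x) / (1 - y) := by field_simp; ring
  have hcomp : (y - x) / (1 + x) ≤ (y - x) / (1 - y) :=
    div_le_div_of_nonneg_left (by linarith) h1y (by linarith)
  rw [artanh_eq_half_log ⟨by linarith, hy.le⟩, artanh_eq_half_log ⟨by linarith, by linarith⟩,
    log_div (by linarith) h1y.ne', log_div (by linarith) (by linarith)]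
  linarith

theorem artanh_div_le {x b s : ℝ} (hx : 0 ≤ x) (hxb : x ≤ b) (hbs : b < s) (hs : s < 1) :
    artanh (x / s) ≤ (1 + 2 * (1 - s) / (s - b)) * artanh x := by
  have hs0 : 0 < s := by linarith
  have hxy : x ≤ x / s := le_div_self hx hs0 hs.le
  have hgap : (s - b) / s ≤ 1 - x / s := by
    rw [sub_div, div_self hs0.ne']; gcongr
  have hy1 : x / s < 1 := by
    linarith [div_pos (sub_pos.2 hbs) hs0]
  calc artanh (x / s) ≤ artanh x + (x / s - x) / (1 - x / s) := by
        linarith [artanh_sub_artanh_le hx hxy hy1]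
    _ ≤ artanh x + (x / s - x) / ((s - b) / s) := by
        gcongr
    _ = artanh x + x * (1 - s) / (s - b) := by
        field_simp
    _ ≤ artanh x + 2 * artanh x * (1 - s) / (s - b) := by
        have := half_le_artanh hx (hxy.trans_lt hy1)
        gcongr
        linarith
    _ = (1 + 2 * (1 - s) / (s - b)) * artanh x := by ring

end Real

noncomputable def diskAut (c z : ℂ) : ℂ := (z - c) / (1 - conj c * z)

section DiskAutomorphism

variable {c p q z : ℂ}

theorem one_sub_conj_mul_ne_zero (hc : ‖c‖ < 1) (hz : ‖z‖ < 1) : 1 - conj c * z ≠ 0 := by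
  intro h
  have : ‖conj c * z‖ < 1 := by
    rw [norm_mul, Complex.norm_conj]
    nlinarith [norm_nonneg c, norm_nonneg z]
  rw [← sub_eq_zero.1 h] at this
  simp at this

theorem normSq_one_sub_conj_mul_sub_normSq_sub (c z : ℂ) :
    Complex.normSq (1 - conj c * z) - Complex.normSq (z - c)
      = (1 - Complex.normSq c) * (1 - Complex.normSq z) := by
  simp only [Complex.normSq_apply, Complex.sub_re, Complex.sub_im, Complex.mul_re,
    Complex.mul_im, Complex.conj_re, Complex.conj_im, Complex.one_re, Complex.one_im]
  ring

theorem norm_diskAut_lt_one (hc : ‖c‖ < 1) (hz : ‖z‖ < 1) : ‖diskAut c z‖ < 1 := by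
  have hden := one_sub_conj_mul_ne_zero hc hz
  rw [diskAut, norm_div, div_lt_one (norm_pos_iff.2 hden)]
  have hc2 : Complex.normSq c < 1 := by rw [← Complex.sq_norm]; nlinarith [norm_nonneg c]
  have hz2 : Complex.normSq z < 1 := by rw [← Complex.sq_norm]; nlinarith [norm_nonneg z]
  have := normSq_one_sub_conj_mul_sub_normSq_sub c z
  have hsq : ‖z - c‖ ^ 2 < ‖1 - conj c * z‖ ^ 2 := by
    rw [Complex.sq_norm, Complex.sq_norm]; nlinarith
  exact lt_of_pow_lt_pow_left₀ 2 (norm_nonneg _) hsq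

theorem diskAut_self (c : ℂ) : diskAut c c = 0 := by simp [diskAut]

theorem diskAut_neg_zero (c : ℂ) : diskAut (-c) 0 = c := by simp [diskAut]

theorem diskAut_neg_diskAut (hc : ‖c‖ < 1) (hz : ‖z‖ < 1) :
    diskAut (-c) (diskAut c z) = z := by
  have hA := one_sub_conj_mul_ne_zero hc hz
  have hcc := one_sub_conj_mul_ne_zero hc hc
  rw [diskAut, diskAut, map_neg, neg_mul, sub_neg_eq_add, sub_neg_eq_add,
    div_add' _ _ _ hA, mul_div_assoc', one_add_div hA, div_div_div_cancel_right₀ hA,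
    div_eq_iff]
  · ring
  · contrapose! hcc
    linear_combination hcc

theorem sub_diskAut (hp : 1 - conj c * p ≠ 0) (hq : 1 - conj c * q ≠ 0) :
    diskAut c p - diskAut c q
      = (p - q) * (1 - conj c * c) / ((1 - conj c * p) * (1 - conj c * q)) := by
  rw [diskAut, diskAut, div_sub_div _ _ hp hq]
  ring

theorem one_sub_conj_diskAut_mul (hp : 1 - conj c * p ≠ 0) (hq : 1 - conj c * q ≠ 0) :
    1 - conj (diskAut c q) * diskAut c p
      = (1 - conj q * p) * (1 - conj c * c) / (conj (1 - conj c * q) * (1 - conj c * p)) := by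
  have hq' : conj (1 - conj c * q) ≠ 0 := (map_ne_zero _).2 hq
  rw [diskAut, diskAut, map_div₀, div_mul_div_comm, one_sub_div (mul_ne_zero hq' hp)]
  simp only [map_sub, map_one, map_mul, Complex.conj_conj]
  ring

theorem rho_diskAut (hc : ‖c‖ < 1) (hp : ‖p‖ < 1) (hq : ‖q‖ < 1) :
    rho (diskAut c p) (diskAut c q) = rho p q := by
  have hA := one_sub_conj_mul_ne_zero hc hp
  have hB := one_sub_conj_mul_ne_zero hc hq
  have hcc := one_sub_conj_mul_ne_zero hc hc
  have hqp := one_sub_conj_mul_ne_zero hq hp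
  have key : (diskAut c p - diskAut c q) / (1 - conj (diskAut c q) * diskAut c p)
      = (p - q) / (1 - conj q * p) * (conj (1 - conj c * q) / (1 - conj c * q)) := by
    rw [sub_diskAut hA hB, one_sub_conj_diskAut_mul hA hB, div_div_div_eq, div_mul_div_comm,
      div_eq_div_iff (by simp [*]) (by simp [*])]
    ring
  have hnorm : ‖conj (1 - conj c * q) / (1 - conj c * q)‖ = 1 := by
    rw [norm_div, Complex.norm_conj, div_self (norm_ne_zero_iff.2 hB)]
  simp only [rho, key, norm_mul, hnorm, mul_one]

end DiskAutomorphism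

theorem mem_unitDisk {z : ℂ} : z ∈ unitDisk ↔ ‖z‖ < 1 := mem_ball_zero_iff

theorem rho_zero_left {t : ℂ} (ht : ‖t‖ ≤ 1) : rho 0 t = Real.artanh ‖t‖ := by
  rw [Real.artanh_eq_half_log ⟨by linarith [norm_nonneg t], ht⟩]
  simp [rho]

theorem rho_eq_artanh_norm_diskAut {a z : ℂ} (ha : ‖a‖ < 1) (hz : ‖z‖ < 1) :
    rho a z = Real.artanh ‖diskAut a z‖ := by
  rw [← rho_diskAut ha ha hz, diskAut_self, rho_zero_left (norm_diskAut_lt_one ha hz).le]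

theorem rho_diskAut_neg {a v : ℂ} (ha : ‖a‖ < 1) (hv : ‖v‖ < 1) :
    rho a (diskAut (-a) v) = Real.artanh ‖v‖ := by
  have ha' : ‖-a‖ < 1 := by rwa [norm_neg]
  rw [← rho_zero_left hv.le, ← rho_diskAut ha' (by simp) hv, diskAut_neg_zero]

theorem rhoX_le_rho_zero {X : Set ℂ} {f : ℂ → ℂ} {t : ℂ} (hf : HolOn f X)
    (ht : t ∈ unitDisk) :
    rhoX X (f 0) (f t) ≤ rho 0 t := by
  refine csInf_le ⟨0, ?_⟩ ⟨f, t, ht, hf, rfl, rfl, rfl⟩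
  rintro r ⟨g, t', ht', -, -, -, rfl⟩
  rw [rho_zero_left (mem_unitDisk.1 ht').le]
  exact Real.artanh_nonneg (norm_nonneg t')

theorem norm_ofReal_mul_lt {s : ℝ} {w : ℂ} (hs : 0 < s) (hw : ‖w‖ < 1) :
    ‖(s : ℂ) * w‖ < s := by
  rw [norm_mul, Complex.norm_real, Real.norm_of_nonneg hs.le]
  exact mul_lt_of_lt_one_right hs hw

theorem mapsTo_diskAut_neg_mul_tanh {a : ℂ} (ha : ‖a‖ < 1) {C : ℝ} (hC : 0 < C) :
    Set.MapsTo (fun w => diskAut (-a) (Real.tanh C * w)) unitDisk (hBall a C) := by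
  intro w hw
  have hs := Real.tanh_pos hC
  have hsw := norm_ofReal_mul_lt hs (mem_unitDisk.1 hw)
  have hsw1 := hsw.trans (Real.tanh_lt_one C)
  refine ⟨mem_unitDisk.2 (norm_diskAut_lt_one (by rwa [norm_neg]) hsw1), ?_⟩
  calc rho a (diskAut (-a) (Real.tanh C * w)) = Real.artanh ‖(Real.tanh C : ℂ) * w‖ :=
        rho_diskAut_neg ha hsw1
    _ < Real.artanh (Real.tanh C) :=
        Real.artanh_lt_artanh (by linarith [norm_nonneg ((Real.tanh C : ℂ) * w)])
          (Real.tanh_lt_one C) hsw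
    _ = C := Real.artanh_tanh C

theorem differentiableOn_diskAut {c : ℂ} (hc : ‖c‖ < 1) :
    DifferentiableOn ℂ (diskAut c) unitDisk :=
  DifferentiableOn.div (by fun_prop) (by fun_prop) fun z hz =>
    one_sub_conj_mul_ne_zero hc (mem_unitDisk.1 hz)

theorem rhoX_le_artanh_div {X : Set ℂ} {a z : ℂ} {C : ℝ} (ha : ‖a‖ < 1) (hz : ‖z‖ < 1)
    (hC : 0 < C) (hX : hBall a C ⊆ X) (hlt : ‖diskAut a z‖ < Real.tanh C) :
    rhoX X a z ≤ Real.artanh (‖diskAut a z‖ / Real.tanh C) := by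
  set s := Real.tanh C
  have hs : 0 < s := Real.tanh_pos hC
  set f : ℂ → ℂ := fun w => diskAut (-a) (s * w)
  have ha' : ‖-a‖ < 1 := by rwa [norm_neg]
  have hf : HolOn f X :=
    ⟨(differentiableOn_diskAut ha').comp (by fun_prop) fun w hw =>
      mem_unitDisk.2 ((norm_ofReal_mul_lt hs (mem_unitDisk.1 hw)).trans (Real.tanh_lt_one C)),
    (mapsTo_diskAut_neg_mul_tanh ha hC).mono_right hX⟩
  set t : ℂ := diskAut a z / s
  have hnt : ‖t‖ = ‖diskAut a z‖ / s := by
    rw [norm_div, Complex.norm_real, Real.norm_of_nonneg hs.le]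
  have ht : t ∈ unitDisk := mem_unitDisk.2 (by rw [hnt]; exact (div_lt_one hs).2 hlt)
  have hf0 : f 0 = a := by simp [f, diskAut_neg_zero]
  have hft : f t = z := by
    simp only [f, t, mul_div_cancel₀ _ (Complex.ofReal_ne_zero.2 hs.ne')]
    exact diskAut_neg_diskAut ha hz
  calc rhoX X a z = rhoX X (f 0) (f t) := by rw [hf0, hft]
    _ ≤ rho 0 t := rhoX_le_rho_zero hf ht
    _ = Real.artanh (‖diskAut a z‖ / s) := by rw [rho_zero_left (mem_unitDisk.1 ht).le, hnt]

theorem tendsto_one_sub_tanh_div_tanh_sub (b : ℝ) (hb : b < 1) :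
    Tendsto (fun C => 2 * (1 - Real.tanh C) / (Real.tanh C - b)) atTop (𝓝 0) := by
  have hnum : Tendsto (fun C => 2 * (1 - Real.tanh C)) atTop (𝓝 (2 * (1 - 1))) :=
    (tendsto_const_nhds.sub Real.tendsto_tanh_atTop).const_mul 2
  have hden : Tendsto (fun C => Real.tanh C - b) atTop (𝓝 (1 - b)) :=
    Real.tendsto_tanh_atTop.sub_const b
  have := hnum.div hden (sub_ne_zero.2 hb.ne')
  rwa [sub_self, mul_zero, zero_div] at this

/-- If the hyperbolic disk of ρ-radius `C > 1` about `a` lies in the subdomain `X` of Δ,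
and `z ∈ X` with `ρ(a,z) < 1`, then `ρ_X(a,z) ≤ (1 + ε(C)) ρ(a,z)` where
`ε(C) → 0` as `C → ∞`. -/
theorem stmt3 :
    ∃ ε : ℝ → ℝ, Filter.Tendsto ε Filter.atTop (nhds 0) ∧
      ∀ (X : Set ℂ) (a z : ℂ) (C : ℝ), IsOpen X → IsConnected X → X ⊆ unitDisk →
        a ∈ X → z ∈ X → hBall a C ⊆ X → rho a z < 1 → 1 < C →
        rhoX X a z ≤ (1 + ε C) * rho a z := by
  refine ⟨fun C => 2 * (1 - Real.tanh C) / (Real.tanh C - Real.tanh 1),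
    tendsto_one_sub_tanh_div_tanh_sub _ (Real.tanh_lt_one 1), ?_⟩
  intro X a z C _ _ hXD haX hzX hX hrho hC
  have ha := mem_unitDisk.1 (hXD haX)
  have hz := mem_unitDisk.1 (hXD hzX)
  rw [rho_eq_artanh_norm_diskAut ha hz] at hrho ⊢
  set x := ‖diskAut a z‖
  have hx : x ∈ Set.Ioo (-1) 1 :=
    ⟨by linarith [norm_nonneg (diskAut a z)], norm_diskAut_lt_one ha hz⟩
  have hx1 : x < Real.tanh 1 := by simpa [Real.tanh_artanh hx] using Real.tanh_strictMono hrho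
  have h1C : Real.tanh 1 < Real.tanh C := Real.tanh_strictMono hC
  calc rhoX X a z ≤ Real.artanh (x / Real.tanh C) :=
        rhoX_le_artanh_div ha hz (by linarith) hX (hx1.trans h1C)
    _ ≤ _ := Real.artanh_div_le (norm_nonneg _) hx1.le h1C (Real.tanh_lt_one C)
end

section
/- Suppose X ⊂ Δ is not ρ-Bloch, a₀, w₀ ∈ X with ρ_X(a₀, w₀) < 1/2, and (ε_n) is a positive sequence with ∏_{n=1}^∞ (1+ε_n)² ≤ 2. Suppose sequences a_n, w_n ∈ X, \tilde{w}_n ∈ Δ, and holomorphic maps f_n : Δ → X satisfy f_n(0) = f_n(a_n) = a_{n−1}, f_n(w_n) = f_n(\tilde{w}_n) = w_{n−1}, and ρ(0, \tilde{w}_n) ≤ ∏_{i=1}^n (1+ε_i) · ρ_X(a₀, w₀). Then any locally uniform subsequential limit F of F_n = f₁ ∘ ⋯ ∘ f_n satisfies F(0) = a₀ and F(\tilde{w}) = w₀ for some \tilde{w} ∈ Δ with ρ(0, \tilde{w}) ≤ 1; in particular F is nonconstant. -/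
open Complex Metric Filter

open scoped Topology

/-! Every `F_n` with `n ≥ 1` sends `0` to `a₀` and `w̃_n` to `w₀`, and `ρ(0, w̃_n) ≤ 1` because
`∏ (1 + ε_i) ≤ 2` and `ρ_X(a₀, w₀) < 1/2`. The hyperbolic ball `{ρ(0, ·) ≤ 1}` is the Euclidean
disk of radius `tanh 1`, hence compact, so a subsequence of the `w̃_n` converges to some `w̃` in
it, and locally uniform convergence gives `F(w̃) = w₀ ≠ a₀ = F(0)`. -/

theorem rho_zero_eq_artanh {z : ℂ} (hz : ‖z‖ ≤ 1) : rho 0 z = Real.artanh ‖z‖ := by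
  rw [Real.artanh_eq_half_log ⟨by linarith [norm_nonneg z], hz⟩]
  simp [rho]

theorem rho_zero_le_iff {z : ℂ} (hz : ‖z‖ < 1) (r : ℝ) : rho 0 z ≤ r ↔ ‖z‖ ≤ Real.tanh r := by
  rw [rho_zero_eq_artanh hz.le, ← Real.artanh_le_artanh_iff ⟨by linarith [norm_nonneg z], hz⟩
    ⟨Real.neg_one_lt_tanh r, Real.tanh_lt_one r⟩, Real.artanh_tanh]

theorem setOf_rho_zero_le_eq_closedBall (r : ℝ) :
    {z ∈ unitDisk | rho 0 z ≤ r} = closedBall (0 : ℂ) (Real.tanh r) := by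
  ext z
  simp only [Set.mem_ofPred_eq, unitDisk, mem_ball_zero_iff, mem_closedBall_zero_iff]
  constructor
  · rintro ⟨hz, h⟩
    exact (rho_zero_le_iff hz r).1 h
  · intro h
    have hz : ‖z‖ < 1 := h.trans_lt (Real.tanh_lt_one r)
    exact ⟨hz, (rho_zero_le_iff hz r).2 h⟩

theorem isCompact_setOf_rho_zero_le (r : ℝ) : IsCompact {z ∈ unitDisk | rho 0 z ≤ r} := by
  rw [setOf_rho_zero_le_eq_closedBall]
  exact isCompact_closedBall _ _

theorem Finset.prod_Icc_le_prod_range_sq {c : ℕ → ℝ} (hc : ∀ i, 1 ≤ c i) (n : ℕ) :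
    ∏ i ∈ Finset.Icc 1 n, c i ≤ ∏ i ∈ Finset.range (n + 1), c i ^ 2 := by
  have hc0 : ∀ i, 0 ≤ c i := fun i => zero_le_one.trans (hc i)
  calc ∏ i ∈ Finset.Icc 1 n, c i
      ≤ ∏ i ∈ Finset.Icc 1 n, c i ^ 2 :=
        Finset.prod_le_prod (fun i _ => hc0 i) fun i _ => le_self_pow₀ (hc i) two_ne_zero
    _ ≤ ∏ i ∈ Finset.range (n + 1), c i ^ 2 :=
        Finset.prod_le_prod_of_subset_of_one_le
          (fun i hi => by simp only [Finset.mem_Icc, Finset.mem_range] at hi ⊢; omega)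
          (fun i _ => sq_nonneg _) fun i _ _ => one_le_pow₀ (hc i)

theorem HolOn.mono {f : ℂ → ℂ} {X Y : Set ℂ} (hf : HolOn f X) (hXY : X ⊆ Y) : HolOn f Y :=
  ⟨hf.1, hf.2.mono_right hXY⟩

theorem holOn_comps {f : ℕ → ℂ → ℂ} (hf : ∀ n, 1 ≤ n → HolOn (f n) unitDisk) :
    ∀ n, HolOn (comps f n) unitDisk
  | 0 => ⟨differentiableOn_id, Set.mapsTo_id _⟩
  | n + 1 =>
    have ⟨hd, hm⟩ := holOn_comps hf n
    have ⟨hd', hm'⟩ := hf (n + 1) n.succ_pos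
    ⟨hd.comp hd' hm', hm.comp hm'⟩

section Chain

variable {f : ℕ → ℂ → ℂ} {b : ℕ → ℂ}

theorem comps_apply_of_chain (hb : ∀ n, 1 ≤ n → f n (b n) = b (n - 1)) :
    ∀ n, comps f n (b n) = b 0
  | 0 => rfl
  | n + 1 => by
    change comps f n (f (n + 1) (b (n + 1))) = b 0
    rw [hb (n + 1) n.succ_pos, Nat.add_sub_cancel, comps_apply_of_chain hb n]

theorem comps_apply_of_apply_eq_chain (hb : ∀ n, 1 ≤ n → f n (b n) = b (n - 1)) {n : ℕ}
    (hn : 1 ≤ n) {z : ℂ} (hz : f n z = b (n - 1)) : comps f n z = b 0 := by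
  obtain ⟨m, rfl⟩ : ∃ m, n = m + 1 := ⟨n - 1, by omega⟩
  change comps f m (f (m + 1) z) = b 0
  rw [hz, Nat.add_sub_cancel, comps_apply_of_chain hb m]

end Chain

section LocallyUniformLimit

variable {α β ι : Type*} [TopologicalSpace α] [UniformSpace β] {G : ι → α → β} {F : α → β}
  {p : Filter ι} {s : Set α}

theorem TendstoLocallyUniformlyOn.comp_tendsto {κ : Type*} {q : Filter κ} {θ : κ → ι}
    (hG : TendstoLocallyUniformlyOn G F p s) (hθ : Tendsto θ q p) :
    TendstoLocallyUniformlyOn (G ∘ θ) F q s := fun u hu x hx =>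
  (hG u hu x hx).imp fun _ ⟨ht, h⟩ => ⟨ht, hθ.eventually h⟩

theorem TendstoLocallyUniformlyOn.eq_of_eventually_apply_eq [T2Space β] [p.NeBot]
    (hG : TendstoLocallyUniformlyOn G F p s) {x : α} (hF : ContinuousWithinAt F s x)
    (hx : x ∈ s) {z : ι → α} (hz : Tendsto z p (𝓝[s] x)) {c : β}
    (hc : ∀ᶠ k in p, G k (z k) = c) : F x = c :=
  tendsto_nhds_unique (hG.tendsto_comp hF hx hz) <|
    tendsto_const_nhds.congr' (hc.mono fun _ h => h.symm)

theorem TendstoLocallyUniformlyOn.exists_mem_apply_eq [FirstCountableTopology α] [T2Space β]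
    {G : ℕ → α → β} (hG : TendstoLocallyUniformlyOn G F atTop s) (hF : ContinuousOn F s)
    {K : Set α} (hK : IsCompact K) (hKs : K ⊆ s) {z : ℕ → α} (hzK : ∀ᶠ k in atTop, z k ∈ K)
    {c : β} (hc : ∀ᶠ k in atTop, G k (z k) = c) : ∃ x ∈ K, F x = c := by
  obtain ⟨x, hxK, ψ, hψ, hzx⟩ := hK.tendsto_subseq' hzK.frequently
  have hψ' := hψ.tendsto_atTop
  have hzx' : Tendsto (z ∘ ψ) atTop (𝓝[s] x) :=
    tendsto_nhdsWithin_iff.2 ⟨hzx, hψ'.eventually (hzK.mono fun _ h => hKs h)⟩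
  exact ⟨x, hxK, (hG.comp_tendsto hψ').eq_of_eventually_apply_eq (hF x (hKs hxK)) (hKs hxK) hzx'
    (hψ'.eventually hc)⟩

end LocallyUniformLimit

theorem stmt15_general (X : Set ℂ) (hXs : X ⊆ unitDisk)
    (ε : ℕ → ℝ) (hε : ∀ n, 0 < ε n)
    (hprod : ∀ N, ∏ i ∈ Finset.range N, (1 + ε i) ^ 2 ≤ 2)
    (a w wt : ℕ → ℂ) (f : ℕ → ℂ → ℂ)
    (hdist : rhoX X (a 0) (w 0) < 1 / 2) (hne : a 0 ≠ w 0)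
    (hhol : ∀ n, 1 ≤ n → HolOn (f n) X)
    (h0 : ∀ n, 1 ≤ n → f n 0 = a (n - 1))
    (han : ∀ n, 1 ≤ n → f n (a n) = a (n - 1))
    (hwn : ∀ n, 1 ≤ n → f n (w n) = w (n - 1))
    (hwtn : ∀ n, 1 ≤ n → f n (wt n) = w (n - 1))
    (hwtd : ∀ n, 1 ≤ n → wt n ∈ unitDisk ∧
      rho 0 (wt n) ≤ (∏ i ∈ Finset.Icc 1 n, (1 + ε i)) * rhoX X (a 0) (w 0)) :
    ∀ φ : ℕ → ℕ, StrictMono φ → ∀ F : ℂ → ℂ,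
      TendstoLocallyUniformlyOn (fun k => comps f (φ k)) F atTop unitDisk →
      F 0 = a 0 ∧ (∃ w' ∈ unitDisk, rho 0 w' ≤ 1 ∧ F w' = w 0) ∧
        ∃ z ∈ unitDisk, ∃ z' ∈ unitDisk, F z ≠ F z' := by
  intro φ hφ F hF
  have hφ1 : ∀ᶠ k in atTop, 1 ≤ φ k := hφ.tendsto_atTop.eventually_ge_atTop 1
  have h0D : (0 : ℂ) ∈ unitDisk := mem_ball_self one_pos
  have hFc : ContinuousOn F unitDisk := hF.continuousOn <| Frequently.of_forall fun k =>
    (holOn_comps (fun n hn => (hhol n hn).mono hXs) (φ k)).1.continuousOn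
  have hF0 : F 0 = a 0 := tendsto_nhds_unique (hF.tendsto_at h0D) <| tendsto_const_nhds.congr' <|
    hφ1.mono fun k hk => (comps_apply_of_apply_eq_chain han hk (h0 _ hk)).symm
  have hwt : ∀ n, 1 ≤ n → rho 0 (wt n) ≤ 1 := fun n hn => by
    have hP0 : 0 ≤ ∏ i ∈ Finset.Icc 1 n, (1 + ε i) :=
      Finset.prod_nonneg fun i _ => by linarith [hε i]
    have hP2 : ∏ i ∈ Finset.Icc 1 n, (1 + ε i) ≤ 2 :=
      (Finset.prod_Icc_le_prod_range_sq (fun i => by linarith [hε i]) n).trans (hprod _)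
    calc rho 0 (wt n) ≤ (∏ i ∈ Finset.Icc 1 n, (1 + ε i)) * rhoX X (a 0) (w 0) := (hwtd n hn).2
      _ ≤ (∏ i ∈ Finset.Icc 1 n, (1 + ε i)) * (1 / 2) := by gcongr
      _ ≤ 1 := by linarith
  obtain ⟨x, ⟨hxD, hx1⟩, hFx⟩ := hF.exists_mem_apply_eq hFc (isCompact_setOf_rho_zero_le 1)
    (Set.sep_subset _ _) (z := fun k => wt (φ k))
    (hφ1.mono fun k hk => ⟨(hwtd _ hk).1, hwt _ hk⟩)
    (hφ1.mono fun k hk => comps_apply_of_apply_eq_chain hwn hk (hwtn _ hk))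
  exact ⟨hF0, ⟨x, hxD, hx1, hFx⟩, 0, h0D, x, hxD, by rw [hF0, hFx]; exact hne⟩

/-- The construction in Theorem 2.3: under the stated recursive conditions, any locally
uniform subsequential limit `F` of the compositions satisfies `F 0 = a₀` and
`F w̃ = w₀` for some `w̃` with `ρ(0, w̃) ≤ 1`; in particular `F` is nonconstant. -/
theorem stmt15 (X : Set ℂ) (hXo : IsOpen X) (hXc : IsConnected X) (hXs : X ⊆ unitDisk)
    (hnb : ¬ IsBloch X)
    (ε : ℕ → ℝ) (hε : ∀ n, 0 < ε n)
    (hprod : ∀ N, ∏ i ∈ Finset.range N, (1 + ε i) ^ 2 ≤ 2)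
    (a w wt : ℕ → ℂ) (f : ℕ → ℂ → ℂ)
    (haX : ∀ n, a n ∈ X) (hwX : ∀ n, w n ∈ X)
    (hdist : rhoX X (a 0) (w 0) < 1 / 2) (hne : a 0 ≠ w 0)
    (hhol : ∀ n, 1 ≤ n → HolOn (f n) X)
    (h0 : ∀ n, 1 ≤ n → f n 0 = a (n - 1))
    (han : ∀ n, 1 ≤ n → f n (a n) = a (n - 1))
    (hwn : ∀ n, 1 ≤ n → f n (w n) = w (n - 1))
    (hwtn : ∀ n, 1 ≤ n → f n (wt n) = w (n - 1))
    (hwtd : ∀ n, 1 ≤ n → wt n ∈ unitDisk ∧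
      rho 0 (wt n) ≤ (∏ i ∈ Finset.Icc 1 n, (1 + ε i)) * rhoX X (a 0) (w 0)) :
    ∀ φ : ℕ → ℕ, StrictMono φ → ∀ F : ℂ → ℂ,
      TendstoLocallyUniformlyOn (fun k => comps f (φ k)) F atTop unitDisk →
      F 0 = a 0 ∧ (∃ w' ∈ unitDisk, rho 0 w' ≤ 1 ∧ F w' = w 0) ∧
        ∃ z ∈ unitDisk, ∃ z' ∈ unitDisk, F z ≠ F z' :=
  stmt15_general X hXs ε hε hprod a w wt f hdist hne hhol h0 han hwn hwtn hwtd
end
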